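/- arXiv:2510.23235 — 4 statements merged into one kernel-verified Lean document; each statement's English description precedes it below -/
import Mathlib

section
/- There exists an absolute constant C > 0 with the following property. Let n ≥ k ≥ 1, let V• ∈ ℝ^{n×k} have orthonormal columns, and let Δ, Δ̃ ∈ ℝ^{n×k} satisfy V•ᵀΔ = 0 and V•ᵀΔ̃ = 0, with Δ of full column rank (so its smallest singular value σ_k(Δ) is positive). Choose any thin SVDs Δ = U ξ Wᵀ and Δ̃ = Ũ ξ̃ W̃ᵀ, and set V = V• W cos(ξ) Wᵀ + U sin(ξ) Wᵀ and Ṽ = V• W̃ cos(ξ̃) W̃ᵀ + Ũ sin(ξ̃) W̃ᵀ (the Grassmann exponentials of Δ and Δ̃ at base point V•). Then ‖V − Ṽ‖_F ≤ (8C/σ_k(Δ) + 2) · ‖Δ − Δ̃‖_F. -/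
/-!
Put `A = UᵀŨ` and `B = WᵀW̃`. The difference of the two exponentials is
`V•(W cos ξ Wᵀ - W̃ cos ξ̃ W̃ᵀ) + (U sin ξ Wᵀ - Ũ sin ξ̃ W̃ᵀ)`, and the two summands are orthogonal
because tangency forces `V•ᵀ U sin ξ = 0`. For orthonormal factors, the squared Frobenius distance
`‖U diag f Wᵀ - Ũ diag g W̃ᵀ‖²` equals `∑ fᵢ² - 2 ∑ fᵢ gⱼ Aᵢⱼ Bᵢⱼ + ∑ gⱼ²`. Since `B` is orthogonal,
this is a combination of the `(fᵢ - gⱼ)²` and `(fᵢ + gⱼ)²` with weights `((Aᵢⱼ ± Bᵢⱼ)/2)²`, plus a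
remainder that is nonnegative by Bessel's inequality for `A`. Applied to `f, g = cos`, `sin` and
`ξ`, `ξ̃`, the fact that `sin` and `cos` are 1-Lipschitz gives `‖V - Ṽ‖² ≤ 3 ‖Δ - Δ̃‖²`, so
`‖V - Ṽ‖ ≤ 2 ‖Δ - Δ̃‖`, which is below the claimed bound for any `C > 0`.
-/

open Matrix

/-- The Frobenius norm of a real matrix. -/
noncomputable def frobNorm {m n : ℕ} (A : Matrix (Fin m) (Fin n) ℝ) : ℝ :=
  Real.sqrt (∑ i, ∑ j, A i j ^ 2)

variable {m p ι κ : Type*}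

/-- `‖U diag f Wᵀ - U' diag g W'ᵀ‖²` for orthonormal `U, U', W, W'`, in terms of the overlap
matrices `A = UᵀU'` and `B = WᵀW'`. -/
def overlapDistSq [Fintype ι] [Fintype κ] (A B : Matrix ι κ ℝ) (f : ι → ℝ) (g : κ → ℝ) : ℝ :=
  ∑ i, f i ^ 2 - 2 * ∑ i, ∑ j, f i * g j * (A i j * B i j) + ∑ j, g j ^ 2

theorem overlapDistSq_eq [Fintype ι] [Fintype κ] (A : Matrix ι κ ℝ) {B : Matrix ι κ ℝ}
    (hrow : ∀ i, ∑ j, B i j ^ 2 = 1) (hcol : ∀ j, ∑ i, B i j ^ 2 = 1) (f : ι → ℝ) (g : κ → ℝ) :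
    overlapDistSq A B f g =
      ∑ i, ∑ j, (((A i j + B i j) / 2) ^ 2 * (f i - g j) ^ 2
        + ((A i j - B i j) / 2) ^ 2 * (f i + g j) ^ 2)
      + (∑ i, f i ^ 2 * (1 - ∑ j, A i j ^ 2) + ∑ j, g j ^ 2 * (1 - ∑ i, A i j ^ 2)) / 2 := by
  have hf : ∀ i, f i ^ 2 = ∑ j, B i j ^ 2 * f i ^ 2 := fun i => by
    rw [← Finset.sum_mul, hrow, one_mul]
  have hg : ∀ j, g j ^ 2 = ∑ i, B i j ^ 2 * g j ^ 2 := fun j => by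
    rw [← Finset.sum_mul, hcol, one_mul]
  have hfA : ∀ i, f i ^ 2 * (1 - ∑ j, A i j ^ 2) = ∑ j, (B i j ^ 2 - A i j ^ 2) * f i ^ 2 :=
    fun i => by rw [← Finset.sum_mul, Finset.sum_sub_distrib, hrow, mul_comm]
  have hgA : ∀ j, g j ^ 2 * (1 - ∑ i, A i j ^ 2) = ∑ i, (B i j ^ 2 - A i j ^ 2) * g j ^ 2 :=
    fun j => by rw [← Finset.sum_mul, Finset.sum_sub_distrib, hcol, mul_comm]
  unfold overlapDistSq
  simp only [Finset.sum_congr rfl fun i _ => hf i, Finset.sum_congr rfl fun j _ => hg j,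
    Finset.sum_congr rfl fun i _ => hfA i, Finset.sum_congr rfl fun j _ => hgA j]
  rw [Finset.sum_comm (f := fun j i => B i j ^ 2 * g j ^ 2),
    Finset.sum_comm (f := fun j i => (B i j ^ 2 - A i j ^ 2) * g j ^ 2)]
  simp only [Finset.mul_sum, Finset.sum_div, ← Finset.sum_add_distrib, ← Finset.sum_sub_distrib]
  refine Finset.sum_congr rfl fun i _ => Finset.sum_congr rfl fun j _ => ?_
  ring

theorem overlapDistSq_self [Fintype ι] [Fintype κ] {B : Matrix ι κ ℝ}
    (hrow : ∀ i, ∑ j, B i j ^ 2 = 1) (hcol : ∀ j, ∑ i, B i j ^ 2 = 1) (f : ι → ℝ) (g : κ → ℝ) :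
    overlapDistSq B B f g = ∑ i, ∑ j, B i j ^ 2 * (f i - g j) ^ 2 := by
  simp [overlapDistSq_eq B hrow hcol, hrow, hcol]

theorem cos_sin_weighted_sq_le (a b x y : ℝ) :
    b ^ 2 * (Real.cos x - Real.cos y) ^ 2
        + (((a + b) / 2) ^ 2 * (Real.sin x - Real.sin y) ^ 2
          + ((a - b) / 2) ^ 2 * (Real.sin x + Real.sin y) ^ 2)
      ≤ 3 * (((a + b) / 2) ^ 2 * (x - y) ^ 2 + ((a - b) / 2) ^ 2 * (x + y) ^ 2) := by
  have hcos₁ : (Real.cos x - Real.cos y) ^ 2 ≤ (x - y) ^ 2 :=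
    sq_le_sq.2 (Real.abs_cos_sub_cos_le x y)
  have hcos₂ : (Real.cos x - Real.cos y) ^ 2 ≤ (x + y) ^ 2 := by
    simpa using sq_le_sq.2 (Real.abs_cos_sub_cos_le x (-y))
  have hsin₁ : (Real.sin x - Real.sin y) ^ 2 ≤ (x - y) ^ 2 :=
    sq_le_sq.2 (Real.abs_sin_sub_sin_le x y)
  have hsin₂ : (Real.sin x + Real.sin y) ^ 2 ≤ (x + y) ^ 2 := by
    simpa using sq_le_sq.2 (Real.abs_sin_sub_sin_le x (-y))
  -- the cosine term is split using `b ^ 2 ≤ 2 ((a + b) / 2) ^ 2 + 2 ((a - b) / 2) ^ 2`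
  have hcos : b ^ 2 * (Real.cos x - Real.cos y) ^ 2
      ≤ 2 * ((a + b) / 2) ^ 2 * (x - y) ^ 2 + 2 * ((a - b) / 2) ^ 2 * (x + y) ^ 2 := by
    nlinarith [mul_le_mul_of_nonneg_left hcos₁ (sq_nonneg ((a + b) / 2)),
      mul_le_mul_of_nonneg_left hcos₂ (sq_nonneg ((a - b) / 2)),
      mul_nonneg (sq_nonneg a) (sq_nonneg (Real.cos x - Real.cos y))]
  nlinarith [mul_le_mul_of_nonneg_left hsin₁ (sq_nonneg ((a + b) / 2)),
    mul_le_mul_of_nonneg_left hsin₂ (sq_nonneg ((a - b) / 2))]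

theorem overlapDistSq_cos_add_sin_le [Fintype ι] [Fintype κ] {A B : Matrix ι κ ℝ}
    (hBrow : ∀ i, ∑ j, B i j ^ 2 = 1) (hBcol : ∀ j, ∑ i, B i j ^ 2 = 1)
    (hArow : ∀ i, ∑ j, A i j ^ 2 ≤ 1) (hAcol : ∀ j, ∑ i, A i j ^ 2 ≤ 1)
    (x : ι → ℝ) (y : κ → ℝ) :
    overlapDistSq B B (fun i => Real.cos (x i)) (fun j => Real.cos (y j))
        + overlapDistSq A B (fun i => Real.sin (x i)) (fun j => Real.sin (y j))
      ≤ 3 * overlapDistSq A B x y := by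
  rw [overlapDistSq_self hBrow hBcol, overlapDistSq_eq A hBrow hBcol,
    overlapDistSq_eq A hBrow hBcol]
  have hweighted : ∑ i, ∑ j, B i j ^ 2 * (Real.cos (x i) - Real.cos (y j)) ^ 2
      + ∑ i, ∑ j, (((A i j + B i j) / 2) ^ 2 * (Real.sin (x i) - Real.sin (y j)) ^ 2
        + ((A i j - B i j) / 2) ^ 2 * (Real.sin (x i) + Real.sin (y j)) ^ 2)
      ≤ 3 * ∑ i, ∑ j, (((A i j + B i j) / 2) ^ 2 * (x i - y j) ^ 2
        + ((A i j - B i j) / 2) ^ 2 * (x i + y j) ^ 2) := by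
    simp only [← Finset.sum_add_distrib, Finset.mul_sum]
    gcongr with i _ j _
    exact cos_sin_weighted_sq_le (A i j) (B i j) (x i) (y j)
  have hx : ∑ i, Real.sin (x i) ^ 2 * (1 - ∑ j, A i j ^ 2)
      ≤ ∑ i, x i ^ 2 * (1 - ∑ j, A i j ^ 2) :=
    Finset.sum_le_sum fun i _ =>
      mul_le_mul_of_nonneg_right Real.sin_sq_le_sq (sub_nonneg.2 (hArow i))
  have hy : ∑ j, Real.sin (y j) ^ 2 * (1 - ∑ i, A i j ^ 2)
      ≤ ∑ j, y j ^ 2 * (1 - ∑ i, A i j ^ 2) :=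
    Finset.sum_le_sum fun j _ =>
      mul_le_mul_of_nonneg_right Real.sin_sq_le_sq (sub_nonneg.2 (hAcol j))
  have hrest : 0 ≤ ∑ i, x i ^ 2 * (1 - ∑ j, A i j ^ 2) + ∑ j, y j ^ 2 * (1 - ∑ i, A i j ^ 2) :=
    add_nonneg (Finset.sum_nonneg fun i _ => mul_nonneg (sq_nonneg _) (sub_nonneg.2 (hArow i)))
      (Finset.sum_nonneg fun j _ => mul_nonneg (sq_nonneg _) (sub_nonneg.2 (hAcol j)))
  linarith

theorem mul_transpose_self_apply_self [Fintype κ] (A : Matrix ι κ ℝ) (i : ι) :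
    (A * Aᵀ) i i = ∑ j, A i j ^ 2 := by
  simp only [mul_apply, transpose_apply, sq]

theorem transpose_mul_self_apply_self [Fintype ι] (A : Matrix ι κ ℝ) (j : κ) :
    (Aᵀ * A) j j = ∑ i, A i j ^ 2 := by
  simp only [mul_apply, transpose_apply, sq]

theorem trace_transpose_mul_self [Fintype m] [Fintype ι] (X : Matrix m ι ℝ) :
    trace (Xᵀ * X) = ∑ i, ∑ j, X i j ^ 2 := by
  simp only [trace, diag, transpose_mul_self_apply_self]
  exact Finset.sum_comm

theorem frobNorm_nonneg {k n : ℕ} (X : Matrix (Fin k) (Fin n) ℝ) : 0 ≤ frobNorm X :=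
  Real.sqrt_nonneg _

theorem frobNorm_sq {k n : ℕ} (X : Matrix (Fin k) (Fin n) ℝ) :
    frobNorm X ^ 2 = trace (Xᵀ * X) := by
  rw [frobNorm, Real.sq_sqrt (by positivity), trace_transpose_mul_self]

theorem trace_transpose_mul_sub_self [Fintype m] [Fintype ι] (X Y : Matrix m ι ℝ) :
    trace ((X - Y)ᵀ * (X - Y)) = trace (Xᵀ * X) - 2 * trace (Xᵀ * Y) + trace (Yᵀ * Y) := by
  have hYX : trace (Yᵀ * X) = trace (Xᵀ * Y) := by
    rw [← trace_transpose, transpose_mul, transpose_transpose]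
  simp only [transpose_sub, Matrix.sub_mul, Matrix.mul_sub, trace_sub, hYX]
  ring

theorem trace_transpose_mul_of_orthogonal [Fintype m] [Fintype ι] [DecidableEq ι] [Fintype κ]
    {V : Matrix m ι ℝ} (hV : Vᵀ * V = 1) (P : Matrix ι κ ℝ) {Q : Matrix m κ ℝ}
    (hQ : Vᵀ * Q = 0) :
    trace ((V * P + Q)ᵀ * (V * P + Q)) = trace (Pᵀ * P) + trace (Qᵀ * Q) := by
  have hQV : Qᵀ * V = 0 := by
    rw [← transpose_transpose (Qᵀ * V), transpose_mul, transpose_transpose, hQ, transpose_zero]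
  simp only [transpose_add, transpose_mul, Matrix.add_mul, Matrix.mul_add, Matrix.mul_assoc]
  simp only [← Matrix.mul_assoc Vᵀ, hV, hQ, ← Matrix.mul_assoc Qᵀ, hQV]
  simp

theorem trace_transpose_mul_diagonal_factor [Fintype m] [Fintype p] [Fintype ι] [DecidableEq ι]
    [Fintype κ] [DecidableEq κ] (U : Matrix m ι ℝ) (W : Matrix p ι ℝ)
    (U' : Matrix m κ ℝ) (W' : Matrix p κ ℝ) (f : ι → ℝ) (g : κ → ℝ) :
    trace ((U * diagonal f * Wᵀ)ᵀ * (U' * diagonal g * W'ᵀ))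
      = ∑ i, ∑ j, f i * g j * ((Uᵀ * U') i j * (Wᵀ * W') i j) := by
  have h : (U * diagonal f * Wᵀ)ᵀ * (U' * diagonal g * W'ᵀ)
      = W * (diagonal f * (Uᵀ * U') * diagonal g) * W'ᵀ := by
    simp only [transpose_mul, transpose_transpose, diagonal_transpose, Matrix.mul_assoc]
  have hB : W'ᵀ * W = (Wᵀ * W')ᵀ := by rw [transpose_mul, transpose_transpose]
  rw [h, Matrix.mul_assoc, trace_mul_comm, Matrix.mul_assoc, hB, ← sum_hadamard_eq]
  simp only [hadamard_apply, mul_diagonal, diagonal_mul]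
  refine Finset.sum_congr rfl fun i _ => Finset.sum_congr rfl fun j _ => ?_
  ring

theorem trace_transpose_mul_self_diagonal_factor [Fintype m] [Fintype p] [Fintype ι]
    [DecidableEq ι] {U : Matrix m ι ℝ} {W : Matrix p ι ℝ}
    (hU : Uᵀ * U = 1) (hW : Wᵀ * W = 1) (f : ι → ℝ) :
    trace ((U * diagonal f * Wᵀ)ᵀ * (U * diagonal f * Wᵀ)) = ∑ i, f i ^ 2 := by
  rw [trace_transpose_mul_diagonal_factor, hU, hW]
  simp [one_apply, sq]

theorem trace_transpose_mul_sub_diagonal_factor [Fintype m] [Fintype p] [Fintype ι]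
    [DecidableEq ι] [Fintype κ] [DecidableEq κ] {U : Matrix m ι ℝ} {W : Matrix p ι ℝ}
    {U' : Matrix m κ ℝ} {W' : Matrix p κ ℝ} (hU : Uᵀ * U = 1) (hW : Wᵀ * W = 1)
    (hU' : U'ᵀ * U' = 1) (hW' : W'ᵀ * W' = 1) (f : ι → ℝ) (g : κ → ℝ) :
    trace ((U * diagonal f * Wᵀ - U' * diagonal g * W'ᵀ)ᵀ
        * (U * diagonal f * Wᵀ - U' * diagonal g * W'ᵀ))
      = overlapDistSq (Uᵀ * U') (Wᵀ * W') f g := by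
  rw [trace_transpose_mul_sub_self, trace_transpose_mul_self_diagonal_factor hU hW,
    trace_transpose_mul_self_diagonal_factor hU' hW', trace_transpose_mul_diagonal_factor,
    overlapDistSq]

theorem sum_sq_transpose_mul_le_one [Fintype m] [Fintype ι] [DecidableEq ι] [Fintype κ]
    [DecidableEq κ] {U : Matrix m ι ℝ} {U' : Matrix m κ ℝ}
    (hU : Uᵀ * U = 1) (hU' : U'ᵀ * U' = 1) (i : ι) : ∑ j, (Uᵀ * U') i j ^ 2 ≤ 1 := by
  -- `N` is the component of `U` orthogonal to the column space of `U'`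
  set N := U - U' * (U'ᵀ * U)
  have hN : Nᵀ * N = 1 - (Uᵀ * U') * (Uᵀ * U')ᵀ := by
    simp only [N, transpose_sub, transpose_mul, transpose_transpose, Matrix.sub_mul,
      Matrix.mul_sub, Matrix.mul_assoc]
    rw [← Matrix.mul_assoc U'ᵀ U' (U'ᵀ * U), hU', Matrix.one_mul, hU]
    abel
  have h := transpose_mul_self_apply_self N i
  rw [hN, Matrix.sub_apply, one_apply_eq, mul_transpose_self_apply_self] at h
  have : 0 ≤ ∑ a, N a i ^ 2 := by positivity
  linarith

theorem mul_factor_map_eq_zero {n : Type*} [Fintype m] [Fintype p] [Fintype ι] [DecidableEq ι]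
    {X : Matrix n m ℝ} {U : Matrix m ι ℝ} {W : Matrix p ι ℝ} {d : ι → ℝ} (hW : Wᵀ * W = 1)
    (h : X * (U * diagonal d * Wᵀ) = 0) {φ : ℝ → ℝ} (hφ : φ 0 = 0) :
    X * (U * diagonal (fun i => φ (d i)) * Wᵀ) = 0 := by
  have hd : X * U * diagonal d = 0 := by
    rw [← Matrix.mul_one (X * U * diagonal d), ← hW]
    simp only [← Matrix.mul_assoc] at h ⊢
    rw [h, Matrix.zero_mul]
  have hφd : X * U * diagonal (fun i => φ (d i)) = 0 := by
    ext a i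
    have hai := congr_fun₂ hd a i
    simp only [mul_diagonal, Matrix.zero_apply, mul_eq_zero] at hai ⊢
    exact hai.imp_right fun hdi => by rw [hdi, hφ]
  simp only [← Matrix.mul_assoc, hφd, Matrix.zero_mul]

noncomputable def grassmannExp [Fintype ι] [DecidableEq ι] (Vb U : Matrix m ι ℝ)
    (W : Matrix ι ι ℝ) (d : ι → ℝ) : Matrix m ι ℝ :=
  Vb * W * diagonal (fun i => Real.cos (d i)) * Wᵀ + U * diagonal (fun i => Real.sin (d i)) * Wᵀ

theorem trace_grassmannExp_sub_le [Fintype m] [Fintype ι] [DecidableEq ι]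
    {Vb U U' : Matrix m ι ℝ} {W W' : Matrix ι ι ℝ} {d d' : ι → ℝ} (hVb : Vbᵀ * Vb = 1)
    (hU : Uᵀ * U = 1) (hU' : U'ᵀ * U' = 1) (hW : Wᵀ * W = 1) (hW₂ : W * Wᵀ = 1)
    (hW' : W'ᵀ * W' = 1) (hW'₂ : W' * W'ᵀ = 1)
    (hΔ : Vbᵀ * (U * diagonal d * Wᵀ) = 0) (hΔ' : Vbᵀ * (U' * diagonal d' * W'ᵀ) = 0) :
    trace ((grassmannExp Vb U W d - grassmannExp Vb U' W' d')ᵀ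
        * (grassmannExp Vb U W d - grassmannExp Vb U' W' d'))
      ≤ 3 * trace ((U * diagonal d * Wᵀ - U' * diagonal d' * W'ᵀ)ᵀ
        * (U * diagonal d * Wᵀ - U' * diagonal d' * W'ᵀ)) := by
  have hBrow : ∀ i, ∑ j, (Wᵀ * W') i j ^ 2 = 1 := fun i => by
    rw [← mul_transpose_self_apply_self, transpose_mul, transpose_transpose, Matrix.mul_assoc,
      ← Matrix.mul_assoc W', hW'₂, Matrix.one_mul, hW, one_apply_eq]
  have hBcol : ∀ j, ∑ i, (Wᵀ * W') i j ^ 2 = 1 := fun j => by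
    rw [← transpose_mul_self_apply_self, transpose_mul, transpose_transpose, Matrix.mul_assoc,
      ← Matrix.mul_assoc W, hW₂, Matrix.one_mul, hW', one_apply_eq]
  have hAcol : ∀ j, ∑ i, (Uᵀ * U') i j ^ 2 ≤ 1 := fun j => by
    convert sum_sq_transpose_mul_le_one hU' hU j using 3 with i
    rw [← transpose_apply (Uᵀ * U'), transpose_mul, transpose_transpose]
  have hsin : Vbᵀ * (U * diagonal (fun i => Real.sin (d i)) * Wᵀ
      - U' * diagonal (fun i => Real.sin (d' i)) * W'ᵀ) = 0 := by
    rw [Matrix.mul_sub, mul_factor_map_eq_zero hW hΔ Real.sin_zero,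
      mul_factor_map_eq_zero hW' hΔ' Real.sin_zero, sub_zero]
  have hsplit : grassmannExp Vb U W d - grassmannExp Vb U' W' d'
      = Vb * (W * diagonal (fun i => Real.cos (d i)) * Wᵀ
          - W' * diagonal (fun i => Real.cos (d' i)) * W'ᵀ)
        + (U * diagonal (fun i => Real.sin (d i)) * Wᵀ
          - U' * diagonal (fun i => Real.sin (d' i)) * W'ᵀ) := by
    simp only [grassmannExp, Matrix.mul_sub, Matrix.mul_assoc]
    abel
  rw [hsplit, trace_transpose_mul_of_orthogonal hVb _ hsin,
    trace_transpose_mul_sub_diagonal_factor hW hW hW' hW',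
    trace_transpose_mul_sub_diagonal_factor hU hW hU' hW',
    trace_transpose_mul_sub_diagonal_factor hU hW hU' hW']
  exact overlapDistSq_cos_add_sin_le hBrow hBcol (sum_sq_transpose_mul_le_one hU hU') hAcol d d'

theorem frobNorm_grassmannExp_sub_le {n k : ℕ} {Vb U U' : Matrix (Fin n) (Fin k) ℝ}
    {W W' : Matrix (Fin k) (Fin k) ℝ} {d d' : Fin k → ℝ} (hVb : Vbᵀ * Vb = 1)
    (hU : Uᵀ * U = 1) (hU' : U'ᵀ * U' = 1) (hW : Wᵀ * W = 1) (hW₂ : W * Wᵀ = 1)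
    (hW' : W'ᵀ * W' = 1) (hW'₂ : W' * W'ᵀ = 1)
    (hΔ : Vbᵀ * (U * diagonal d * Wᵀ) = 0) (hΔ' : Vbᵀ * (U' * diagonal d' * W'ᵀ) = 0) :
    frobNorm (grassmannExp Vb U W d - grassmannExp Vb U' W' d')
      ≤ 2 * frobNorm (U * diagonal d * Wᵀ - U' * diagonal d' * W'ᵀ) := by
  rw [← sq_le_sq₀ (frobNorm_nonneg _) (mul_nonneg zero_le_two (frobNorm_nonneg _)), mul_pow,
    frobNorm_sq, frobNorm_sq]
  have h0 : 0 ≤ trace ((U * diagonal d * Wᵀ - U' * diagonal d' * W'ᵀ)ᵀ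
      * (U * diagonal d * Wᵀ - U' * diagonal d' * W'ᵀ)) := by
    rw [← frobNorm_sq]
    positivity
  linarith [trace_grassmannExp_sub_le hVb hU hU' hW hW₂ hW' hW'₂ hΔ hΔ']

/-- Sensitivity of the Grassmann exponential map.  There is an absolute constant `C > 0`
such that for any base point `V•` with orthonormal columns, any tangent vectors
`Δ, Δ̃` (i.e. `V•ᵀΔ = 0`, `V•ᵀΔ̃ = 0`) with `Δ` of full column rank, and any thin SVDs
`Δ = U ξ Wᵀ`, `Δ̃ = Ũ ξ̃ W̃ᵀ`, the Grassmann exponentials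
`V = V• W cos(ξ) Wᵀ + U sin(ξ) Wᵀ` and `Ṽ = V• W̃ cos(ξ̃) W̃ᵀ + Ũ sin(ξ̃) W̃ᵀ` satisfy
`‖V − Ṽ‖_F ≤ (8C/σ_k(Δ) + 2) ‖Δ − Δ̃‖_F`, where `σ_k(Δ) = min_i ξ_{ii}` is the smallest
singular value of `Δ`. -/
theorem grassmann_exp_sensitivity :
    ∃ C : ℝ, 0 < C ∧
      ∀ (n k : ℕ), 1 ≤ k → k ≤ n →
      ∀ (Vb : Matrix (Fin n) (Fin k) ℝ), Vbᵀ * Vb = 1 →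
      ∀ (Δ Δt : Matrix (Fin n) (Fin k) ℝ),
        Vbᵀ * Δ = 0 → Vbᵀ * Δt = 0 →
      ∀ (U Ut : Matrix (Fin n) (Fin k) ℝ) (W Wt : Matrix (Fin k) (Fin k) ℝ)
        (d dt : Fin k → ℝ),
        Uᵀ * U = 1 → Utᵀ * Ut = 1 →
        Wᵀ * W = 1 → W * Wᵀ = 1 → Wtᵀ * Wt = 1 → Wt * Wtᵀ = 1 →
        (∀ i, 0 ≤ d i) → (∀ i, 0 ≤ dt i) →
        Δ = U * Matrix.diagonal d * Wᵀ →
        Δt = Ut * Matrix.diagonal dt * Wtᵀ →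
        0 < (⨅ i : Fin k, d i) →
        frobNorm ((Vb * W * Matrix.diagonal (fun i => Real.cos (d i)) * Wᵀ
              + U * Matrix.diagonal (fun i => Real.sin (d i)) * Wᵀ)
            - (Vb * Wt * Matrix.diagonal (fun i => Real.cos (dt i)) * Wtᵀ
              + Ut * Matrix.diagonal (fun i => Real.sin (dt i)) * Wtᵀ))
          ≤ (8 * C / (⨅ i : Fin k, d i) + 2) * frobNorm (Δ - Δt) := by
  refine ⟨1, one_pos, fun n k _ _ Vb hVb Δ Δt hΔ hΔt U Ut W Wt d dt hU hUt hW hW₂ hWt hWt₂ _ _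
    hΔsvd hΔtsvd hσ => ?_⟩
  subst hΔsvd hΔtsvd
  calc _ ≤ 2 * frobNorm (U * diagonal d * Wᵀ - Ut * diagonal dt * Wtᵀ) :=
        frobNorm_grassmannExp_sub_le hVb hU hUt hW hW₂ hWt hWt₂ hΔ hΔt
    _ ≤ _ := mul_le_mul_of_nonneg_right (le_add_of_nonneg_left (by positivity))
        (frobNorm_nonneg _)
end

section
/- Let N ∈ ℕ, let f : [−1,1] → ℝ be (N+1)-times continuously differentiable, and let t₀,…,t_N be the Chebyshev nodes t_j = cos((2j+1)π/(2N+2)). Let p_N(t) = Σ_{j=0}^{N} f(t_j) ℓ_j(t) be the Lagrange interpolating polynomial of f at these nodes, where ℓ_j is the j-th Lagrange basis polynomial. Then for every t ∈ [−1,1], |f(t) − p_N(t)| ≤ (1 / (2^N (N+1)!)) · max_{τ∈[−1,1]} |f^{(N+1)}(τ)|. -/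
open Polynomial Set

lemma polyContDiff (p : ℝ[X]) (n : WithTop ℕ∞) : ContDiff ℝ n (fun x => p.eval x) := by
  induction p using Polynomial.induction_on' with
  | add p q hp hq => simpa [Polynomial.eval_add] using hp.add hq
  | monomial k a =>
    simp only [Polynomial.eval_monomial]
    exact contDiff_const.mul (contDiff_id.pow k)

lemma chebyT_natDegree_le (n : ℕ) : (Polynomial.Chebyshev.T ℝ n).natDegree ≤ n := by
  induction n using Nat.twoStepInduction with
  | zero => simp [Polynomial.Chebyshev.T_zero]
  | one => simp [Polynomial.Chebyshev.T_one]
  | more n ih1 ih2 =>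
    have h : Polynomial.Chebyshev.T ℝ (n + 2 : ℕ) =
        2 * X * Polynomial.Chebyshev.T ℝ (n + 1 : ℕ) - Polynomial.Chebyshev.T ℝ n := by
      push_cast
      exact Polynomial.Chebyshev.T_add_two ℝ n
    rw [h]
    refine (Polynomial.natDegree_sub_le _ _).trans (max_le ?_ (ih1.trans (by omega)))
    refine (Polynomial.natDegree_mul_le).trans ?_
    have h1 : (2 * X : ℝ[X]).natDegree ≤ 1 := by
      refine Polynomial.natDegree_mul_le.trans ?_
      simp
    omega

lemma chebyT_sub_lead (n : ℕ) :
    (Polynomial.Chebyshev.T ℝ (n + 1 : ℕ) - C ((2:ℝ)^n) * X ^ (n+1)).natDegree ≤ n := by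
  induction n using Nat.twoStepInduction with
  | zero => simp [Polynomial.Chebyshev.T_one]
  | one =>
    have h2 : Polynomial.Chebyshev.T ℝ ((1:ℕ) + 1 : ℕ) = 2 * X ^ 2 - 1 := by
      norm_num
      exact_mod_cast Polynomial.Chebyshev.T_two ℝ
    rw [h2]
    refine Polynomial.natDegree_le_iff_coeff_eq_zero.mpr ?_
    intro k hk
    have h3 : C ((2:ℝ)^1) * X ^ (1+1) = 2 * X ^ 2 := by
      rw [show ((2:ℝ[X])) = C 2 from (map_ofNat C 2).symm]
      norm_num
    rw [h3]
    have h4 : (2 * X ^ 2 - 1 - (2 * X ^ 2) : ℝ[X]) = -1 := by ring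
    rw [h4]
    simp only [Polynomial.coeff_neg, Polynomial.coeff_one]
    rw [if_neg (by omega)]
    simp
  | more n ih1 ih2 =>
    have h : Polynomial.Chebyshev.T ℝ (n + 3 : ℕ) =
        2 * X * Polynomial.Chebyshev.T ℝ (n + 2 : ℕ) - Polynomial.Chebyshev.T ℝ (n + 1 : ℕ) := by
      have h0 := Polynomial.Chebyshev.T_add_two ℝ (n + 1)
      have e1 : ((n:ℤ) + 1 + 2) = ((n:ℤ) + 3) := by ring
      have e2 : ((n:ℤ) + 1 + 1) = ((n:ℤ) + 2) := by ring
      rw [e1, e2] at h0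
      push_cast
      exact h0
    have hC : (2 * X : ℝ[X]) * (C ((2:ℝ)^(n+1)) * X ^ (n+2)) = C ((2:ℝ)^(n+2)) * X ^ (n+3) := by
      have : C ((2:ℝ)^(n+2)) = 2 * C ((2:ℝ)^(n+1)) := by
        rw [pow_succ', Polynomial.C_mul, show ((C 2 : ℝ[X])) = 2 from map_ofNat C 2]
      rw [this]
      ring
    have key : Polynomial.Chebyshev.T ℝ (n + 2 + 1 : ℕ) - C ((2:ℝ)^(n+2)) * X ^ (n+2+1) =
        2 * X * (Polynomial.Chebyshev.T ℝ (n + 1 + 1 : ℕ) - C ((2:ℝ)^(n+1)) * X ^ (n+1+1))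
          - Polynomial.Chebyshev.T ℝ (n + 1 : ℕ) := by
      have e1 : ((n:ℕ) + 2 + 1 : ℕ) = (n + 3 : ℕ) := by omega
      have e2 : ((n:ℕ) + 1 + 1 : ℕ) = (n + 2 : ℕ) := by omega
      rw [e1, e2, h, mul_sub, hC]
      ring
    rw [key]
    refine (Polynomial.natDegree_sub_le _ _).trans
      (max_le ?_ ((chebyT_natDegree_le (n+1)).trans (by omega)))
    refine (Polynomial.natDegree_mul_le).trans ?_
    have h1 : (2 * X : ℝ[X]).natDegree ≤ 1 := by
      refine Polynomial.natDegree_mul_le.trans ?_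
      simp
    have h2 := Polynomial.natDegree_sub_le (Polynomial.Chebyshev.T ℝ (n + 1 + 1 : ℕ))
      (C ((2:ℝ)^(n+1)) * X ^ (n+1+1))
    omega

lemma polyIDW (p : ℝ[X]) (n : ℕ) {s : Set ℝ} (hs : UniqueDiffOn ℝ s) :
    ∀ x ∈ s, iteratedDerivWithin n (fun y => p.eval y) s x =
      (Polynomial.derivative^[n] p).eval x := by
  induction n generalizing p with
  | zero => intro x hx; simp
  | succ n ih =>
    intro x hx
    rw [iteratedDerivWithin_succ']
    have hcongr : Set.EqOn (derivWithin (fun y => p.eval y) s)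
        (fun y => p.derivative.eval y) s := by
      intro y hy
      rw [(p.differentiableAt).derivWithin (hs.uniqueDiffWithinAt hy)]
      exact Polynomial.deriv p
    rw [iteratedDerivWithin_congr hcongr hx, ih p.derivative x hx,
      Function.iterate_succ_apply]

-- iterated Rolle
lemma iterRolle : ∀ (n : ℕ) (g : ℝ → ℝ), ContDiffOn ℝ n g (Set.Icc (-1:ℝ) 1) →
    ∀ x : Fin (n+1) → ℝ, StrictMono x → (∀ i, x i ∈ Set.Icc (-1:ℝ) 1) →
    (∀ i, g (x i) = 0) →
    ∃ ξ ∈ Set.Icc (-1:ℝ) 1, iteratedDerivWithin n g (Set.Icc (-1:ℝ) 1) ξ = 0 := by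
  intro n
  induction n with
  | zero =>
    intro g hg x hmono hmem hz
    exact ⟨x 0, hmem 0, by simpa using hz 0⟩
  | succ n ih =>
    intro g hg x hmono hmem hz
    set s : Set ℝ := Set.Icc (-1:ℝ) 1 with hs_def
    have hs : UniqueDiffOn ℝ s := uniqueDiffOn_Icc (by norm_num)
    have hrolle : ∀ i : Fin (n+1), ∃ c ∈ Set.Ioo (x i.castSucc) (x i.succ),
        derivWithin g s c = 0 := by
      intro i
      have hlt : x i.castSucc < x i.succ := hmono (Fin.castSucc_lt_succ (i := i))
      have hsub : Set.Icc (x i.castSucc) (x i.succ) ⊆ s :=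
        Set.Icc_subset_Icc (hmem i.castSucc).1 (hmem i.succ).2
      refine exists_hasDerivAt_eq_zero hlt (hg.continuousOn.mono hsub)
        ((hz i.castSucc).trans (hz i.succ).symm) ?_
      intro y hy
      have hys : s ∈ nhds y := by
        refine Icc_mem_nhds ?_ ?_
        · exact lt_of_le_of_lt (hmem i.castSucc).1 hy.1
        · exact lt_of_lt_of_le hy.2 (hmem i.succ).2
      have hdiff : DifferentiableAt ℝ g y := by
        have h1 : DifferentiableWithinAt ℝ g s y :=
          (hg.differentiableOn (by norm_num)) y (hsub (Set.mem_Icc.mpr ⟨hy.1.le, hy.2.le⟩))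
        exact h1.differentiableAt hys
      have := hdiff.hasDerivAt
      rwa [← derivWithin_of_mem_nhds hys] at this
    choose c hc1 hc2 using hrolle
    have hcmono : StrictMono c := by
      rw [Fin.strictMono_iff_lt_succ]
      intro i
      calc c i.castSucc < x i.castSucc.succ := (hc1 i.castSucc).2
        _ = x i.succ.castSucc := by rw [Fin.succ_castSucc]
        _ < c i.succ := (hc1 i.succ).1
    have hcmem : ∀ i, c i ∈ s := by
      intro i
      exact ⟨(hmem i.castSucc).1.trans (hc1 i).1.le, (hc1 i).2.le.trans (hmem i.succ).2⟩
    have hg' : ContDiffOn ℝ n (derivWithin g s) s := by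
      refine hg.derivWithin hs ?_
      exact_mod_cast le_refl (n+1 : ℕ)
    obtain ⟨ξ, hξ, hd⟩ := ih (derivWithin g s) hg' c hcmono hcmem hc2
    refine ⟨ξ, hξ, ?_⟩
    rw [iteratedDerivWithin_succ']
    exact hd

/-- Error of Lagrange interpolation at Chebyshev nodes: if `f` is `(N+1)`-times continuously
differentiable on `[-1,1]`, `t_j = cos((2j+1)π/(2N+2))` are the Chebyshev nodes and
`p_N(t) = Σ_j f(t_j) ℓ_j(t)` is the Lagrange interpolant, then for every `t ∈ [-1,1]`,
`|f(t) − p_N(t)| ≤ (1/(2^N (N+1)!)) · max_{τ ∈ [-1,1]} |f^{(N+1)}(τ)|`. -/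
theorem chebyshev_lagrange_interpolation_error
    (N : ℕ) (f : ℝ → ℝ)
    (hf : ContDiffOn ℝ (N + 1) f (Set.Icc (-1 : ℝ) 1))
    (node : Fin (N + 1) → ℝ)
    (hnode : ∀ j : Fin (N + 1),
      node j = Real.cos ((2 * (j : ℝ) + 1) * Real.pi / (2 * (N : ℝ) + 2)))
    (p : ℝ → ℝ)
    (hp : ∀ t : ℝ, p t = ∑ j : Fin (N + 1), f (node j) *
      ∏ i ∈ Finset.univ.erase j, (t - node i) / (node j - node i))
    (t : ℝ) (ht : t ∈ Set.Icc (-1 : ℝ) 1) :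
    |f t - p t| ≤ (1 / ((2 : ℝ) ^ N * (Nat.factorial (N + 1) : ℝ))) *
      sSup ((fun τ => |iteratedDerivWithin (N + 1) f (Set.Icc (-1 : ℝ) 1) τ|) ''
        Set.Icc (-1 : ℝ) 1) := by
  have hpi := Real.pi_pos
  set s : Set ℝ := Set.Icc (-1 : ℝ) 1 with hs_def
  have hs : UniqueDiffOn ℝ s := uniqueDiffOn_Icc (by norm_num)
  set θ : Fin (N + 1) → ℝ := fun j => (2 * (j : ℝ) + 1) * Real.pi / (2 * (N : ℝ) + 2) with hθ_def
  have hθmem : ∀ j, θ j ∈ Set.Ioo 0 Real.pi := by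
    intro j
    constructor
    · have h1 : (0:ℝ) < 2 * (j:ℝ) + 1 := by positivity
      have h2 : (0:ℝ) < 2 * (N:ℝ) + 2 := by positivity
      exact div_pos (mul_pos h1 hpi) h2
    · rw [hθ_def]
      have h2 : (0:ℝ) < 2 * (N:ℝ) + 2 := by positivity
      rw [div_lt_iff₀ h2]
      have hj : (j:ℝ) ≤ (N:ℝ) := by
        exact_mod_cast Nat.lt_succ_iff.mp j.isLt
      nlinarith
  have hθinj : Function.Injective θ := by
    intro i j hij
    have h2 : (0:ℝ) < 2 * (N:ℝ) + 2 := by positivity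
    rw [hθ_def] at hij
    simp only [div_eq_div_iff h2.ne' h2.ne'] at hij
    field_simp at hij
    have hij' : (i:ℝ) = (j:ℝ) := by
      linarith
    exact Fin.ext (by exact_mod_cast hij')
  have hinj : Function.Injective node := by
    intro i j hij
    apply hθinj
    apply Real.strictAntiOn_cos.injOn
      (Set.mem_Icc.mpr ⟨(hθmem i).1.le, (hθmem i).2.le⟩)
      (Set.mem_Icc.mpr ⟨(hθmem j).1.le, (hθmem j).2.le⟩)
    rwa [hnode i, hnode j] at hij
  have hnodeIoo : ∀ j, node j ∈ Set.Ioo (-1:ℝ) 1 := by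
    intro j
    rw [hnode j]
    constructor
    · have := Real.strictAntiOn_cos (Set.mem_Icc.mpr ⟨(hθmem j).1.le, (hθmem j).2.le⟩)
        (Set.mem_Icc.mpr ⟨hpi.le, le_refl _⟩) (hθmem j).2
      rwa [Real.cos_pi] at this
    · have := Real.strictAntiOn_cos (Set.mem_Icc.mpr ⟨le_refl _, hpi.le⟩)
        (Set.mem_Icc.mpr ⟨(hθmem j).1.le, (hθmem j).2.le⟩) (hθmem j).1
      rwa [Real.cos_zero] at this
  have hnodes : ∀ j, node j ∈ s := fun j => Set.Ioo_subset_Icc_self (hnodeIoo j)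
  -- the nodal polynomial
  set Q : ℝ[X] := ∏ j : Fin (N+1), (X - C (node j)) with hQ_def
  have hQmonic : Q.Monic := monic_prod_of_monic _ _ fun j _ => monic_X_sub_C _
  have hQdeg : Q.natDegree = N + 1 := by
    rw [hQ_def, natDegree_prod_of_monic _ _ fun j _ => monic_X_sub_C _]
    simp [natDegree_X_sub_C]
  have hQeval : ∀ y : ℝ, Q.eval y = ∏ j : Fin (N+1), (y - node j) := by
    intro y; rw [hQ_def, eval_prod]; simp
  -- Chebyshev identity
  have hT : Polynomial.Chebyshev.T ℝ (N + 1 : ℕ) = C ((2:ℝ)^N) * Q := by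
    have hzero : Polynomial.Chebyshev.T ℝ (N + 1 : ℕ) - C ((2:ℝ)^N) * Q = 0 := by
      apply Polynomial.eq_zero_of_natDegree_lt_card_of_eval_eq_zero _ hinj
      · intro j
        have hTj : (Polynomial.Chebyshev.T ℝ (N + 1 : ℕ)).eval (node j) = 0 := by
          rw [hnode j]
          have hc := Polynomial.Chebyshev.T_real_cos
            ((2 * (j:ℝ) + 1) * Real.pi / (2 * (N:ℝ) + 2)) ((N : ℤ) + 1)
          push_cast at hc ⊢
          rw [hc, Real.cos_eq_zero_iff]
          refine ⟨(j : ℤ), ?_⟩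
          have h2 : (2 * (N:ℝ) + 2) ≠ 0 := by positivity
          push_cast
          field_simp
        have hQj : Q.eval (node j) = 0 := by
          rw [hQ_def, eval_prod]
          exact Finset.prod_eq_zero (Finset.mem_univ j) (by simp)
        push_cast at hTj
        simp [hTj, hQj]
      · -- degree bound
        have hXQ : (X ^ (N+1) - Q : ℝ[X]).natDegree ≤ N := by
          by_cases h0 : (X ^ (N+1) - Q : ℝ[X]) = 0
          · simp [h0]
          · have hd : ((X:ℝ[X]) ^ (N+1)).degree = Q.degree := by
              rw [degree_X_pow, Polynomial.degree_eq_natDegree hQmonic.ne_zero, hQdeg]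
            have hlt := Polynomial.degree_sub_lt hd (by exact pow_ne_zero _ X_ne_zero)
              (by rw [leadingCoeff_X_pow, hQmonic.leadingCoeff])
            rw [degree_X_pow] at hlt
            have := (Polynomial.natDegree_lt_iff_degree_lt h0).mpr hlt
            omega
        have hsplit : Polynomial.Chebyshev.T ℝ (N + 1 : ℕ) - C ((2:ℝ)^N) * Q =
            (Polynomial.Chebyshev.T ℝ (N + 1 : ℕ) - C ((2:ℝ)^N) * X ^ (N+1))
              + C ((2:ℝ)^N) * (X ^ (N+1) - Q) := by ring
        rw [hsplit]
        have h1 := chebyT_sub_lead N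
        have h2 : (C ((2:ℝ)^N) * (X ^ (N+1) - Q)).natDegree ≤ N :=
          Polynomial.natDegree_mul_le.trans (by simp [natDegree_C, hXQ])
        have := Polynomial.natDegree_add_le
          (Polynomial.Chebyshev.T ℝ (N + 1 : ℕ) - C ((2:ℝ)^N) * X ^ (N+1))
          (C ((2:ℝ)^N) * (X ^ (N+1) - Q))
        have hcard : Fintype.card (Fin (N+1)) = N + 1 := Fintype.card_fin _
        omega
    exact sub_eq_zero.mp hzero
  -- bound on nodal product
  have homega : ∀ y ∈ s, |∏ j : Fin (N+1), (y - node j)| ≤ 1 / 2^N := by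
    intro y hy
    have hyc : Real.cos (Real.arccos y) = y := Real.cos_arccos hy.1 hy.2
    have habs : |(Polynomial.Chebyshev.T ℝ (N+1:ℕ)).eval y| ≤ 1 := by
      conv_lhs => rw [← hyc]
      rw [Polynomial.Chebyshev.T_real_cos]
      exact Real.abs_cos_le_one _
    have hval : (Polynomial.Chebyshev.T ℝ (N+1:ℕ)).eval y
        = 2^N * ∏ j : Fin (N+1), (y - node j) := by
      rw [hT]; simp [hQeval]
    rw [hval, abs_mul, abs_pow, abs_two] at habs
    have h2N : (0:ℝ) < 2^N := by positivity
    rw [le_div_iff₀ h2N, mul_comm]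
    exact habs.trans (le_refl 1)
  -- the interpolant as a polynomial
  set P : ℝ[X] := Lagrange.interpolate Finset.univ node (fun j => f (node j)) with hP_def
  have hinjOn : Set.InjOn node ↑(Finset.univ : Finset (Fin (N+1))) := hinj.injOn
  have hPd : P.degree < ((N+1 : ℕ) : WithBot ℕ) := by
    have := Lagrange.degree_interpolate_lt (r := fun j => f (node j)) hinjOn
    simpa [hP_def] using this
  have hPnat : P.natDegree ≤ N := by
    by_cases h0 : P = 0
    · simp [h0]
    · have := (Polynomial.natDegree_lt_iff_degree_lt h0).mpr hPd
      omega
  have hPnode : ∀ j, P.eval (node j) = f (node j) := by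
    intro j
    rw [hP_def]
    exact Lagrange.eval_interpolate_at_node _ hinjOn (Finset.mem_univ j)
  have hpP : ∀ y : ℝ, p y = P.eval y := by
    intro y
    rw [hp y, hP_def, Lagrange.interpolate_apply, eval_finset_sum]
    refine Finset.sum_congr rfl fun j _ => ?_
    rw [eval_mul, eval_C]
    congr 1
    rw [Lagrange.basis, eval_prod]
    refine Finset.prod_congr rfl fun i hi => ?_
    rw [Lagrange.basisDivisor, eval_mul, eval_C, eval_sub, eval_X, eval_C, div_eq_inv_mul]
  -- sup bound facts
  set M := sSup ((fun τ => |iteratedDerivWithin (N + 1) f (Set.Icc (-1 : ℝ) 1) τ|) ''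
      Set.Icc (-1 : ℝ) 1) with hM_def
  have hM0 : 0 ≤ M := by
    apply Real.sSup_nonneg
    rintro z ⟨τ, _, rfl⟩
    exact abs_nonneg _
  have hcont : ContinuousOn (fun τ => |iteratedDerivWithin (N+1) f s τ|) s := by
    have h1 : ContinuousOn (iteratedDerivWithin (N+1) f s) s := by
      apply hf.continuousOn_iteratedDerivWithin ?_ hs
      exact_mod_cast le_refl ((N : WithTop ℕ∞) + 1)
    exact h1.abs
  have hbdd : BddAbove ((fun τ => |iteratedDerivWithin (N+1) f s τ|) '' s) :=
    (isCompact_Icc.image_of_continuousOn hcont).bddAbove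
  have hMb : ∀ τ ∈ s, |iteratedDerivWithin (N+1) f s τ| ≤ M := fun τ hτ =>
    le_csSup hbdd (Set.mem_image_of_mem _ hτ)
  by_cases hex : ∃ j, t = node j
  · obtain ⟨j, rfl⟩ := hex
    rw [hpP, hPnode]
    simp only [sub_self, abs_zero]
    exact mul_nonneg (by positivity) hM0
  · push_neg at hex
    have hωt : (∏ j : Fin (N+1), (t - node j)) ≠ 0 :=
      Finset.prod_ne_zero_iff.mpr fun j _ => sub_ne_zero.mpr (hex j)
    set lam : ℝ := (f t - p t) / (∏ j : Fin (N+1), (t - node j)) with hlam_def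
    set R : ℝ[X] := P + C lam * Q with hR_def
    set g : ℝ → ℝ := f - fun y => R.eval y with hg_def
    have hfC : ContDiffOn ℝ ((N+1:ℕ) : WithTop ℕ∞) f s := by exact_mod_cast hf
    have hgC : ContDiffOn ℝ ((N+1:ℕ) : WithTop ℕ∞) g s :=
      hfC.sub (polyContDiff R _).contDiffOn
    have hQ0 : ∀ j, Q.eval (node j) = 0 := by
      intro j
      rw [hQeval]
      exact Finset.prod_eq_zero (Finset.mem_univ j) (by simp)
    have hgnode : ∀ j, g (node j) = 0 := by
      intro j
      simp [hg_def, hR_def, hPnode j, hQ0 j]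
    have hgt : g t = 0 := by
      have hcan : lam * (∏ j : Fin (N+1), (t - node j)) = f t - p t :=
        div_mul_cancel₀ _ hωt
      simp only [hg_def, Pi.sub_apply, hR_def, eval_add, eval_mul, eval_C, hQeval]
      rw [← hpP]
      linarith
    have htnot : t ∉ Finset.image node Finset.univ := by
      simp only [Finset.mem_image, Finset.mem_univ, true_and, not_exists]
      intro j hj
      exact hex j hj.symm
    set F : Finset ℝ := insert t (Finset.image node Finset.univ) with hF_def
    have hcardF : F.card = N + 2 := by
      rw [hF_def, Finset.card_insert_of_notMem htnot,
        Finset.card_image_of_injective _ hinj]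
      simp
    set e := F.orderIsoOfFin hcardF with he_def
    set x : Fin (N+2) → ℝ := fun i => (e i : ℝ) with hx_def
    have hxmono : StrictMono x := fun i j hij => by
      exact_mod_cast e.strictMono hij
    have hxF : ∀ i, x i ∈ F := fun i => (e i).2
    have hFs : ∀ y ∈ F, y ∈ s ∧ g y = 0 := by
      intro y hy
      rw [hF_def] at hy
      rcases Finset.mem_insert.mp hy with rfl | hy'
      · exact ⟨ht, hgt⟩
      · obtain ⟨j, _, rfl⟩ := Finset.mem_image.mp hy'
        exact ⟨hnodes j, hgnode j⟩
    obtain ⟨ξ, hξ, hd0⟩ := iterRolle (N+1) g hgC x hxmono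
      (fun i => (hFs _ (hxF i)).1) (fun i => (hFs _ (hxF i)).2)
    have hsub := iteratedDerivWithin_sub hξ hs (hfC.contDiffWithinAt hξ)
      ((polyContDiff R ((N+1:ℕ) : WithTop ℕ∞)).contDiffOn.contDiffWithinAt hξ)
    have hpoly := polyIDW R (N+1) hs ξ hξ
    have hRder : Polynomial.derivative^[N+1] R = C ((Nat.factorial (N+1) : ℝ) * lam) := by
      have hRnat : R.natDegree ≤ N + 1 := by
        refine (Polynomial.natDegree_add_le _ _).trans ?_
        have h2 : (C lam * Q).natDegree ≤ N + 1 :=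
          Polynomial.natDegree_mul_le.trans (by simp [hQdeg])
        omega
      have h0 : (Polynomial.derivative^[N+1] R).natDegree ≤ 0 := by
        have := Polynomial.natDegree_iterate_derivative R (N+1)
        omega
      rw [Polynomial.eq_C_of_natDegree_le_zero h0]
      congr 1
      rw [Polynomial.coeff_iterate_derivative]
      simp only [zero_add, Nat.descFactorial_self]
      have hQc : Q.coeff (N+1) = 1 := by
        have := hQmonic.coeff_natDegree
        rwa [hQdeg] at this
      have hRc : R.coeff (N+1) = lam := by
        rw [hR_def, Polynomial.coeff_add, Polynomial.coeff_C_mul,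
          Polynomial.coeff_eq_zero_of_natDegree_lt (lt_of_le_of_lt hPnat (by omega)), hQc]
        ring
      rw [hRc, nsmul_eq_mul]
    have hfval : iteratedDerivWithin (N+1) f s ξ = (Nat.factorial (N+1) : ℝ) * lam := by
      have hh : iteratedDerivWithin (N+1) g s ξ
          = iteratedDerivWithin (N+1) f s ξ - (Nat.factorial (N+1):ℝ) * lam := by
        rw [hg_def, hsub, hpoly, hRder, eval_C]
      rw [hh] at hd0
      linarith
    have hfactpos : (0:ℝ) < (Nat.factorial (N+1) : ℝ) := by
      exact_mod_cast Nat.factorial_pos (N+1)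
    have hlam_bound : |lam| ≤ M / (Nat.factorial (N+1) : ℝ) := by
      have hle : lam = iteratedDerivWithin (N+1) f s ξ / (Nat.factorial (N+1):ℝ) := by
        rw [hfval]
        field_simp
      rw [hle, abs_div, abs_of_pos hfactpos]
      gcongr
      exact hMb ξ hξ
    have hfp : f t - p t = lam * ∏ j : Fin (N+1), (t - node j) :=
      (div_mul_cancel₀ _ hωt).symm
    rw [hfp, abs_mul]
    calc |lam| * |∏ j : Fin (N+1), (t - node j)|
        ≤ (M / (Nat.factorial (N+1):ℝ)) * (1/2^N) := by
          exact mul_le_mul hlam_bound (homega t ht) (abs_nonneg _)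
            (div_nonneg hM0 hfactpos.le)
      _ = (1 / ((2:ℝ)^N * (Nat.factorial (N+1) : ℝ))) * M := by
          ring
end

section
/- Let n ≥ k ≥ 1, let V•, U, Ũ ∈ ℝ^{n×k} have orthonormal columns, let W, W̃ ∈ ℝ^{k×k} be orthogonal matrices, and let ξ, ξ̃ ∈ ℝ^{k×k} be diagonal matrices with real entries. Set V = V• W cos(ξ) Wᵀ + U sin(ξ) Wᵀ and Ṽ = V• W̃ cos(ξ̃) W̃ᵀ + Ũ sin(ξ̃) W̃ᵀ. Then ‖V − Ṽ‖_F ≤ 3‖W − W̃‖_F + ‖U − Ũ‖_F + ‖sin(ξ) − sin(ξ̃)‖_F + ‖cos(ξ) − cos(ξ̃)‖_F. -/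
/-!
Write `V - Ṽ = V•(W cos ξ Wᵀ - W̃ cos ξ̃ W̃ᵀ) + (U - Ũ) sin ξ Wᵀ + Ũ (sin ξ Wᵀ - sin ξ̃ W̃ᵀ)`.
The Frobenius norm is unchanged by multiplying on the left by a matrix with orthonormal columns
or on the right by its transpose, and does not grow under multiplication by a diagonal matrix with
entries in `[-1, 1]`. Telescoping each bracket once more, the first costs `2‖W - W̃‖ + ‖cos ξ - cos ξ̃‖`
and the last `‖sin ξ - sin ξ̃‖ + ‖W - W̃‖`.
-/

open Matrix

namespace Matrix

attribute [local instance] frobeniusSeminormedAddCommGroup frobeniusNormedAddCommGroup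

variable {l m n : Type*} [Fintype l] [Fintype m] [Fintype n]

theorem frobenius_norm_le_of_forall_norm_le {α : Type*} [SeminormedAddCommGroup α]
    {A B : Matrix m n α} (h : ∀ i j, ‖A i j‖ ≤ ‖B i j‖) : ‖A‖ ≤ ‖B‖ := by
  simp only [frobenius_norm_def]
  gcongr with i _ j _
  exact h i j

section NormedRing

variable {α : Type*} [NormedRing α]

theorem frobenius_norm_mul_diagonal_le [DecidableEq n] (A : Matrix m n α) {v : n → α}
    (hv : ∀ j, ‖v j‖ ≤ 1) : ‖A * diagonal v‖ ≤ ‖A‖ :=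
  frobenius_norm_le_of_forall_norm_le fun i j => by
    rw [mul_diagonal]
    exact (norm_mul_le _ _).trans (mul_le_of_le_one_right (norm_nonneg _) (hv j))

theorem frobenius_norm_diagonal_mul_le [DecidableEq m] (A : Matrix m n α) {v : m → α}
    (hv : ∀ i, ‖v i‖ ≤ 1) : ‖diagonal v * A‖ ≤ ‖A‖ :=
  frobenius_norm_le_of_forall_norm_le fun i j => by
    rw [diagonal_mul]
    exact (norm_mul_le _ _).trans (mul_le_of_le_one_left (norm_nonneg _) (hv i))

end NormedRing

section RCLike

variable {𝕜 : Type*} [RCLike 𝕜]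

theorem frobenius_norm_sq_eq_re_trace (A : Matrix m n 𝕜) :
    ‖A‖ ^ 2 = RCLike.re (trace (Aᴴ * A)) := by
  rw [frobenius_norm_def, ← Real.rpow_natCast, ← Real.rpow_mul (by positivity), Finset.sum_comm]
  norm_num [trace, mul_apply, RCLike.conj_mul]

theorem frobenius_norm_mul_of_conjTranspose_mul_self [DecidableEq m] {Q : Matrix l m 𝕜}
    (hQ : Qᴴ * Q = 1) (A : Matrix m n 𝕜) : ‖Q * A‖ = ‖A‖ := by
  have : ‖Q * A‖ ^ 2 = ‖A‖ ^ 2 := by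
    rw [frobenius_norm_sq_eq_re_trace, frobenius_norm_sq_eq_re_trace, conjTranspose_mul,
      Matrix.mul_assoc, ← Matrix.mul_assoc Qᴴ, hQ, Matrix.one_mul]
  exact (pow_left_inj₀ (norm_nonneg _) (norm_nonneg _) two_ne_zero).mp this

theorem frobenius_norm_mul_conjTranspose_of_conjTranspose_mul_self [DecidableEq n]
    {R : Matrix l n 𝕜} (hR : Rᴴ * R = 1) (A : Matrix m n 𝕜) : ‖A * Rᴴ‖ = ‖A‖ := by
  rw [← frobenius_norm_conjTranspose, conjTranspose_mul, conjTranspose_conjTranspose,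
    frobenius_norm_mul_of_conjTranspose_mul_self hR, frobenius_norm_conjTranspose]

theorem frobenius_norm_diagonal_mul_conjTranspose_sub_le [DecidableEq n] {R R' : Matrix l n 𝕜}
    (hR : Rᴴ * R = 1) {v v' : n → 𝕜} (hv' : ∀ i, ‖v' i‖ ≤ 1) :
    ‖diagonal v * Rᴴ - diagonal v' * R'ᴴ‖ ≤ ‖diagonal v - diagonal v'‖ + ‖R - R'‖ := by
  have hsplit : diagonal v * Rᴴ - diagonal v' * R'ᴴ
      = (diagonal v - diagonal v') * Rᴴ + diagonal v' * (R - R')ᴴ := by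
    rw [conjTranspose_sub, Matrix.sub_mul, Matrix.mul_sub]; abel
  calc ‖diagonal v * Rᴴ - diagonal v' * R'ᴴ‖
      ≤ ‖(diagonal v - diagonal v') * Rᴴ‖ + ‖diagonal v' * (R - R')ᴴ‖ :=
        hsplit ▸ norm_add_le _ _
    _ ≤ ‖diagonal v - diagonal v'‖ + ‖R - R'‖ := by
        gcongr
        · rw [frobenius_norm_mul_conjTranspose_of_conjTranspose_mul_self hR]
        · exact (frobenius_norm_diagonal_mul_le _ hv').trans_eq (frobenius_norm_conjTranspose _)

theorem frobenius_norm_mul_diagonal_mul_conjTranspose_sub_le [DecidableEq n]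
    {R R' : Matrix l n 𝕜} (hR : Rᴴ * R = 1) (hR' : R'ᴴ * R' = 1) {v v' : n → 𝕜}
    (hv : ∀ i, ‖v i‖ ≤ 1) (hv' : ∀ i, ‖v' i‖ ≤ 1) :
    ‖R * diagonal v * Rᴴ - R' * diagonal v' * R'ᴴ‖
      ≤ 2 * ‖R - R'‖ + ‖diagonal v - diagonal v'‖ := by
  have hsplit : R * diagonal v * Rᴴ - R' * diagonal v' * R'ᴴ
      = (R - R') * diagonal v * Rᴴ + R' * (diagonal v * Rᴴ - diagonal v' * R'ᴴ) := by
    simp only [Matrix.sub_mul, Matrix.mul_sub, Matrix.mul_assoc]; abel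
  calc ‖R * diagonal v * Rᴴ - R' * diagonal v' * R'ᴴ‖
      ≤ ‖(R - R') * diagonal v * Rᴴ‖ + ‖R' * (diagonal v * Rᴴ - diagonal v' * R'ᴴ)‖ :=
        hsplit ▸ norm_add_le _ _
    _ ≤ ‖R - R'‖ + (‖diagonal v - diagonal v'‖ + ‖R - R'‖) := by
        gcongr
        · rw [frobenius_norm_mul_conjTranspose_of_conjTranspose_mul_self hR]
          exact frobenius_norm_mul_diagonal_le _ hv
        · rw [frobenius_norm_mul_of_conjTranspose_mul_self hR']
          exact frobenius_norm_diagonal_mul_conjTranspose_sub_le hR hv'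
    _ = 2 * ‖R - R'‖ + ‖diagonal v - diagonal v'‖ := by ring

end RCLike

end Matrix

attribute [local instance] frobeniusSeminormedAddCommGroup frobeniusNormedAddCommGroup

theorem frobNorm_eq_norm {m n : ℕ} (A : Matrix (Fin m) (Fin n) ℝ) : frobNorm A = ‖A‖ := by
  rw [frobNorm, frobenius_norm_def, Real.sqrt_eq_rpow]
  simp [Real.norm_eq_abs, sq_abs]

theorem frobNorm_exp_diff_le_general (n k : ℕ)
    (Vb U Ut : Matrix (Fin n) (Fin k) ℝ)
    (hVb : Vbᵀ * Vb = 1) (hUt : Utᵀ * Ut = 1)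
    (W Wt : Matrix (Fin k) (Fin k) ℝ)
    (hW : Wᵀ * W = 1)
    (hWt : Wtᵀ * Wt = 1)
    (d dt : Fin k → ℝ) :
    frobNorm ((Vb * W * Matrix.diagonal (fun i => Real.cos (d i)) * Wᵀ
          + U * Matrix.diagonal (fun i => Real.sin (d i)) * Wᵀ)
        - (Vb * Wt * Matrix.diagonal (fun i => Real.cos (dt i)) * Wtᵀ
          + Ut * Matrix.diagonal (fun i => Real.sin (dt i)) * Wtᵀ))
      ≤ 3 * frobNorm (W - Wt) + frobNorm (U - Ut)
        + frobNorm (Matrix.diagonal (fun i => Real.sin (d i))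
            - Matrix.diagonal (fun i => Real.sin (dt i)))
        + frobNorm (Matrix.diagonal (fun i => Real.cos (d i))
            - Matrix.diagonal (fun i => Real.cos (dt i))) := by
  set c := diagonal fun i => Real.cos (d i)
  set c' := diagonal fun i => Real.cos (dt i)
  set s := diagonal fun i => Real.sin (d i)
  set s' := diagonal fun i => Real.sin (dt i)
  simp only [frobNorm_eq_norm, ← conjTranspose_eq_transpose_of_trivial] at hVb hUt hW hWt ⊢
  have hsplit : Vb * W * c * Wᴴ + U * s * Wᴴ - (Vb * Wt * c' * Wtᴴ + Ut * s' * Wtᴴ)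
      = Vb * (W * c * Wᴴ - Wt * c' * Wtᴴ) + (U - Ut) * s * Wᴴ + Ut * (s * Wᴴ - s' * Wtᴴ) := by
    simp only [Matrix.sub_mul, Matrix.mul_sub, Matrix.mul_assoc]; abel
  have hcos (x : ℝ) : ‖Real.cos x‖ ≤ 1 := Real.abs_cos_le_one x
  have hsin (x : ℝ) : ‖Real.sin x‖ ≤ 1 := Real.abs_sin_le_one x
  calc _ ≤ ‖Vb * (W * c * Wᴴ - Wt * c' * Wtᴴ)‖ + ‖(U - Ut) * s * Wᴴ‖
          + ‖Ut * (s * Wᴴ - s' * Wtᴴ)‖ := hsplit ▸ norm_add₃_le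
    _ ≤ (2 * ‖W - Wt‖ + ‖c - c'‖) + ‖U - Ut‖ + (‖s - s'‖ + ‖W - Wt‖) := by
        gcongr
        · rw [frobenius_norm_mul_of_conjTranspose_mul_self hVb]
          exact frobenius_norm_mul_diagonal_mul_conjTranspose_sub_le hW hWt
            (fun i => hcos _) (fun i => hcos _)
        · rw [frobenius_norm_mul_conjTranspose_of_conjTranspose_mul_self hW]
          exact frobenius_norm_mul_diagonal_le _ fun i => hsin _
        · rw [frobenius_norm_mul_of_conjTranspose_mul_self hUt]
          exact frobenius_norm_diagonal_mul_conjTranspose_sub_le hW fun i => hsin _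
    _ = _ := by ring

/-- For `V•, U, Ũ ∈ ℝ^{n×k}` with orthonormal columns, orthogonal `W, W̃ ∈ ℝ^{k×k}` and
diagonal `ξ = diag d`, `ξ̃ = diag d̃`, setting `V = V• W cos(ξ) Wᵀ + U sin(ξ) Wᵀ` and
`Ṽ = V• W̃ cos(ξ̃) W̃ᵀ + Ũ sin(ξ̃) W̃ᵀ`:
`‖V − Ṽ‖_F ≤ 3‖W − W̃‖_F + ‖U − Ũ‖_F + ‖sin(ξ) − sin(ξ̃)‖_F + ‖cos(ξ) − cos(ξ̃)‖_F`. -/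
theorem frobNorm_exp_diff_le (n k : ℕ) (hk : 1 ≤ k) (hkn : k ≤ n)
    (Vb U Ut : Matrix (Fin n) (Fin k) ℝ)
    (hVb : Vbᵀ * Vb = 1) (hU : Uᵀ * U = 1) (hUt : Utᵀ * Ut = 1)
    (W Wt : Matrix (Fin k) (Fin k) ℝ)
    (hW : Wᵀ * W = 1) (hW' : W * Wᵀ = 1)
    (hWt : Wtᵀ * Wt = 1) (hWt' : Wt * Wtᵀ = 1)
    (d dt : Fin k → ℝ) :
    frobNorm ((Vb * W * Matrix.diagonal (fun i => Real.cos (d i)) * Wᵀ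
          + U * Matrix.diagonal (fun i => Real.sin (d i)) * Wᵀ)
        - (Vb * Wt * Matrix.diagonal (fun i => Real.cos (dt i)) * Wtᵀ
          + Ut * Matrix.diagonal (fun i => Real.sin (dt i)) * Wtᵀ))
      ≤ 3 * frobNorm (W - Wt) + frobNorm (U - Ut)
        + frobNorm (Matrix.diagonal (fun i => Real.sin (d i))
            - Matrix.diagonal (fun i => Real.sin (dt i)))
        + frobNorm (Matrix.diagonal (fun i => Real.cos (d i))
            - Matrix.diagonal (fun i => Real.cos (dt i))) :=
  frobNorm_exp_diff_le_general n k Vb U Ut hVb hUt W Wt hW hWt d dt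
end

section
/- Let n ≥ k ≥ 1, let V• ∈ ℝ^{n×k} have orthonormal columns, let U ∈ ℝ^{n×k} have orthonormal columns, let W ∈ ℝ^{k×k} be orthogonal, and let ξ ∈ ℝ^{k×k} be diagonal with real entries. Let Q ∈ ℝ^{k×k} be any orthogonal matrix satisfying Q ξ Qᵀ = ξ (so that (UQ) ξ (WQ)ᵀ = U ξ Wᵀ). Then the value of the Grassmann exponential computed from the two factorizations coincides: V• (WQ) cos(ξ) (WQ)ᵀ + (UQ) sin(ξ) (WQ)ᵀ = V• W cos(ξ) Wᵀ + U sin(ξ) Wᵀ. -/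
open Matrix

namespace Matrix

variable {n R : Type*} [Fintype n] [DecidableEq n]

/-- Commuting with `diagonal d` means `Q i j * (d j - d i) = 0`, so `Q i j ≠ 0` forces
`d i = d j`. -/
theorem Commute.diagonal_comp [CommRing R] [NoZeroDivisors R] {Q : Matrix n n R} {d : n → R}
    (h : Commute Q (diagonal d)) (f : R → R) : Commute Q (diagonal fun i => f (d i)) := by
  ext i j
  have hij : Q i j * d j = d i * Q i j := by
    simpa only [mul_diagonal, diagonal_mul] using congrFun (congrFun h.eq i) j
  simp only [mul_diagonal, diagonal_mul]
  rcases eq_or_ne (Q i j) 0 with hQ | hQ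
  · simp [hQ]
  · rw [mul_comm (d i)] at hij
    rw [mul_left_cancel₀ hQ hij, mul_comm]

theorem commute_of_mul_mul_transpose_eq [CommSemiring R] {Q A : Matrix n n R}
    (hQ : Qᵀ * Q = 1) (h : Q * A * Qᵀ = A) : Commute Q A := by
  calc Q * A = Q * A * Qᵀ * Q := by rw [Matrix.mul_assoc _ Qᵀ, hQ, Matrix.mul_one]
    _ = A * Q := by rw [h]

theorem mul_mul_transpose_eq_of_commute [CommSemiring R] {Q A : Matrix n n R}
    (hQ : Qᵀ * Q = 1) (h : Commute Q A) : Q * A * Qᵀ = A := by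
  rw [h.eq, Matrix.mul_assoc, mul_eq_one_comm.mp hQ, Matrix.mul_one]

end Matrix

theorem grassmann_exp_svd_invariance_general (n k : ℕ)
    (Vb U : Matrix (Fin n) (Fin k) ℝ)
    (W : Matrix (Fin k) (Fin k) ℝ)
    (d : Fin k → ℝ)
    (Q : Matrix (Fin k) (Fin k) ℝ) (hQ : Qᵀ * Q = 1)
    (hcomm : Q * Matrix.diagonal d * Qᵀ = Matrix.diagonal d) :
    Vb * (W * Q) * Matrix.diagonal (fun i => Real.cos (d i)) * (W * Q)ᵀ
        + (U * Q) * Matrix.diagonal (fun i => Real.sin (d i)) * (W * Q)ᵀ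
      = Vb * W * Matrix.diagonal (fun i => Real.cos (d i)) * Wᵀ
        + U * Matrix.diagonal (fun i => Real.sin (d i)) * Wᵀ := by
  have hd := commute_of_mul_mul_transpose_eq hQ hcomm
  have hcos := mul_mul_transpose_eq_of_commute hQ (hd.diagonal_comp Real.cos)
  have hsin := mul_mul_transpose_eq_of_commute hQ (hd.diagonal_comp Real.sin)
  calc _ = Vb * W * (Q * diagonal (fun i => Real.cos (d i)) * Qᵀ) * Wᵀ
          + U * (Q * diagonal (fun i => Real.sin (d i)) * Qᵀ) * Wᵀ := by
        simp only [transpose_mul, Matrix.mul_assoc]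
    _ = _ := by rw [hcos, hsin]

/-- Invariance of the Grassmann exponential under the rotations of singular vectors
allowed by the non-uniqueness of the SVD: if `Q` is orthogonal with `Q ξ Qᵀ = ξ`, then
the value `V• W cos(ξ) Wᵀ + U sin(ξ) Wᵀ` computed from the factorization
`(UQ) ξ (WQ)ᵀ` coincides with the one computed from `U ξ Wᵀ`. -/
theorem grassmann_exp_svd_invariance (n k : ℕ) (hk : 1 ≤ k) (hkn : k ≤ n)
    (Vb U : Matrix (Fin n) (Fin k) ℝ)
    (hVb : Vbᵀ * Vb = 1) (hU : Uᵀ * U = 1)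
    (W : Matrix (Fin k) (Fin k) ℝ) (hW : Wᵀ * W = 1) (hW' : W * Wᵀ = 1)
    (d : Fin k → ℝ)
    (Q : Matrix (Fin k) (Fin k) ℝ) (hQ : Qᵀ * Q = 1) (hQ' : Q * Qᵀ = 1)
    (hcomm : Q * Matrix.diagonal d * Qᵀ = Matrix.diagonal d) :
    Vb * (W * Q) * Matrix.diagonal (fun i => Real.cos (d i)) * (W * Q)ᵀ
        + (U * Q) * Matrix.diagonal (fun i => Real.sin (d i)) * (W * Q)ᵀ
      = Vb * W * Matrix.diagonal (fun i => Real.cos (d i)) * Wᵀ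
        + U * Matrix.diagonal (fun i => Real.sin (d i)) * Wᵀ :=
  grassmann_exp_svd_invariance_general n k Vb U W d Q hQ hcomm
end
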